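/- Every symmetric unitary matrix U (i.e. U unitary with Uᵀ = U) can be written as U = VᵀV for some unitary matrix V. -/

import Mathlib

/-!
A unitary `U` has finite spectrum on the unit circle, so the square root `z ↦ z ^ (1/2)` can be
interpolated on the spectrum by a polynomial `q`. Then `V = q(U)` is unitary with `V * V = U`, and
being a polynomial in the symmetric matrix `U`, it is symmetric, whence `Vᵀ * V = V * V = U`.
-/

open Matrix Polynomial

theorem Polynomial.exists_eval_eq_of_finite {K : Type*} [Field K] (f : K → K) {s : Set K}
    (hs : s.Finite) : ∃ q : K[X], ∀ x ∈ s, q.eval x = f x := by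
  classical
  exact ⟨Lagrange.interpolate hs.toFinset id f, fun x hx =>
    Lagrange.eval_interpolate_at_node f (Set.injOn_id _) (hs.mem_toFinset.mpr hx)⟩

theorem Matrix.transpose_aeval {n R : Type*} [Fintype n] [DecidableEq n] [CommSemiring R]
    (M : Matrix n n R) (p : R[X]) : (aeval M p)ᵀ = aeval Mᵀ p := by
  simpa [aeval_op_apply] using congrArg MulOpposite.unop
    (aeval_algHom_apply (transposeAlgEquiv n R R) M p).symm

theorem Complex.cpow_inv_two_mem_unitary {z : ℂ} (hz : z ∈ unitary ℂ) :
    z ^ (2⁻¹ : ℂ) ∈ unitary ℂ := by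
  have hnorm : ‖z ^ (2⁻¹ : ℂ)‖ = 1 := by
    simpa [CStarRing.norm_of_mem_unitary hz] using norm_cpow_inv_nat z 2
  rw [Unitary.mem_iff_star_mul_self, RCLike.star_def, conj_mul', hnorm]
  norm_num

theorem Complex.cpow_inv_two_mul_self (z : ℂ) : z ^ (2⁻¹ : ℂ) * z ^ (2⁻¹ : ℂ) = z := by
  simpa [sq] using cpow_nat_inv_pow z two_ne_zero

theorem exists_aeval_mem_unitary_mul_self_eq {A : Type*} [TopologicalSpace A] [Ring A]
    [StarRing A] [Algebra ℂ A] [ContinuousFunctionalCalculus ℂ A IsStarNormal] {u : A}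
    (hu : u ∈ unitary A) (hfin : (spectrum ℂ u).Finite) :
    ∃ q : ℂ[X], aeval u q ∈ unitary A ∧ aeval u q * aeval u q = u := by
  obtain ⟨q, hq⟩ := exists_eval_eq_of_finite (· ^ (2⁻¹ : ℂ)) hfin
  have : IsStarNormal u := isStarNormal_of_mem_unitary hu
  refine ⟨q, ?_, ?_⟩ <;> rw [← cfc_polynomial q u]
  · rw [cfc_unitary_iff _ u]
    intro z hz
    rw [hq z hz]
    exact Unitary.mem_iff_star_mul_self.mp
      (Complex.cpow_inv_two_mem_unitary (spectrum_subset_unitary_of_mem_unitary hu hz))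
  · rw [← cfc_mul .., cfc_congr (g := id) fun z hz => ?_, cfc_id ℂ u]
    simp only [hq z hz, Complex.cpow_inv_two_mul_self, id]

open scoped Matrix.Norms.L2Operator

/-- Autonne–Takagi factorization: every symmetric unitary matrix `U` can be
written as `U = Vᵀ V` for some unitary `V`. -/
theorem stmt_15 (N : ℕ) (U : Matrix (Fin N) (Fin N) ℂ)
    (hU : U ∈ Matrix.unitaryGroup (Fin N) ℂ) (hsym : Uᵀ = U) :
    ∃ V : Matrix (Fin N) (Fin N) ℂ,
      V ∈ Matrix.unitaryGroup (Fin N) ℂ ∧ U = Vᵀ * V := by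
  obtain ⟨q, hunitary, hsq⟩ := exists_aeval_mem_unitary_mul_self_eq hU U.finite_spectrum
  exact ⟨aeval U q, hunitary, by rw [transpose_aeval, hsym, hsq]⟩
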